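/- Let n ≥ 1 and 1 ≤ k ≤ n be integers and let d_1, …, d_k be positive integers with d_1 + … + d_k < n + 1. Set a_j = (Σ_{i=1}^k d_i + (n−k+1)d_j − (n+1)) / ((n−k+1)d_j), and for 1 ≤ m ≤ k set r_m := ((n+1) − Σ_{j=1}^m d_j − Σ_{j=m+1}^k a_j d_j) / d_m. Then 0 < r_m ≤ n − m + 1 for every 1 ≤ m ≤ k. -/

import Mathlib

/-!
Writing `D = ∑ d i` and `c = n - k + 1`, every `a j * d j` equals `d j + (D - (n + 1)) / c`, so the
numerator of `r m` telescopes to `(n + 1 - D) * (n - m) / c` and `r m = (n + 1 - D) (n - m) / (c d m)`.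
Positivity is `D < n + 1`; the upper bound `r m ≤ n - m` is `n + 1 - D ≤ c * d m`, which follows
from `D ≥ (k - 1) + d m` since all `d i ≥ 1`.
-/

open Finset

theorem Finset.card_sub_one_add_le_sum {ι R : Type*} [Ring R] [PartialOrder R] [IsOrderedRing R]
    {s : Finset ι} {f : ι → R} (hf : ∀ j ∈ s, 1 ≤ f j) {i : ι} (hi : i ∈ s) :
    (#s : R) - 1 + f i ≤ ∑ j ∈ s, f j := by
  classical
  have hrest : #(s.erase i) • (1 : R) ≤ ∑ j ∈ s.erase i, f j :=
    card_nsmul_le_sum _ _ _ fun j hj ↦ hf j (mem_of_mem_erase hj)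
  rw [card_erase_of_mem hi, nsmul_one, Nat.cast_pred (card_pos.mpr ⟨i, hi⟩)] at hrest
  rw [← add_sum_erase s f hi, add_comm]
  gcongr

section ConeIndex

variable {K : Type*} [Field K] {n k : ℕ} {d a : ℕ → K}

theorem cone_coeff_mul_eq {c D N x y : K} (hc : c ≠ 0) (hy : y ≠ 0)
    (hx : x = (D + c * y - N) / (c * y)) : x * y = y + (D - N) / c := by
  rw [hx]
  field_simp
  ring

theorem cone_index_numerator_eq {m : ℕ} (hmk : m < k) (hc : (n : K) - k + 1 ≠ 0)
    (hd : ∀ j < k, d j ≠ 0)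
    (ha : ∀ j < k, a j =
      ((∑ i ∈ range k, d i) + ((n : K) - k + 1) * d j - ((n : K) + 1)) /
        (((n : K) - k + 1) * d j)) :
    (n : K) + 1 - ∑ j ∈ range (m + 1), d j - ∑ j ∈ Ico (m + 1) k, a j * d j =
      ((n : K) + 1 - ∑ j ∈ range k, d j) * (n - m) / (n - k + 1) := by
  have hterm : ∀ j ∈ Ico (m + 1) k,
      a j * d j = d j + ((∑ i ∈ range k, d i) - (n + 1)) / (n - k + 1) := fun j hj ↦
    have hjk := (mem_Ico.mp hj).2
    cone_coeff_mul_eq hc (hd j hjk) (ha j hjk)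
  have hsplit := sum_range_add_sum_Ico d (Nat.succ_le_of_lt hmk)
  rw [sum_congr rfl hterm, sum_add_distrib, sum_const, Nat.card_Ico, nsmul_eq_mul,
    Nat.cast_sub (Nat.succ_le_of_lt hmk), ← hsplit]
  field_simp
  push_cast
  ring

end ConeIndex

theorem cone_defect_le {K : Type*} [Field K] [LinearOrder K] [IsStrictOrderedRing K]
    {n k m : ℕ} {d : ℕ → K} (hkn : k ≤ n) (hmk : m < k) (hd : ∀ j < k, 1 ≤ d j) :
    (n : K) + 1 - ∑ j ∈ range k, d j ≤ ((n : K) - k + 1) * d m := by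
  have hsum := card_sub_one_add_le_sum (s := range k) (fun j hj ↦ hd j (mem_range.mp hj))
    (mem_range.mpr hmk)
  have hkn' : (k : K) ≤ n := by exact_mod_cast hkn
  rw [card_range] at hsum
  nlinarith [hd m hmk]

-- Indices are 0-based: `m` is step `m + 1` of the paper, whose bound `n - m + 1` reads `n - m` here.
theorem cone_index_bounds_general
    (n k : ℕ) (hkn : k ≤ n)
    (d : ℕ → ℕ) (hd : ∀ j < k, 0 < d j)
    (hsum : ∑ j ∈ range k, d j < n + 1)
    (a : ℕ → ℚ)
    (ha : ∀ j < k, a j =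
      ((∑ i ∈ range k, (d i : ℚ)) + ((n : ℚ) - k + 1) * d j - ((n : ℚ) + 1)) /
        (((n : ℚ) - k + 1) * d j))
    (r : ℕ → ℚ)
    (hr : ∀ m < k, r m =
      (((n : ℚ) + 1) - (∑ j ∈ range (m + 1), (d j : ℚ)) -
        (∑ j ∈ Ico (m + 1) k, a j * d j)) / d m) :
    ∀ m < k, 0 < r m ∧ r m ≤ (n : ℚ) - m := by
  intro m hm
  have hd1 : ∀ j < k, (1 : ℚ) ≤ d j := fun j hj ↦ by exact_mod_cast hd j hj
  have hc : (0 : ℚ) < n - k + 1 := by linarith [(Nat.cast_le (α := ℚ)).mpr hkn]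
  have hdm : (0 : ℚ) < d m := by linarith [hd1 m hm]
  have hdefect : (0 : ℚ) < n + 1 - ∑ j ∈ range k, (d j : ℚ) := by
    rw [sub_pos]; exact_mod_cast hsum
  have hnm : (0 : ℚ) < n - m := by
    rw [sub_pos]; exact_mod_cast hm.trans_le hkn
  rw [hr m hm, cone_index_numerator_eq hm hc.ne' (fun j hj ↦ Nat.cast_ne_zero.mpr (hd j hj).ne') ha,
    div_div]
  refine ⟨by positivity, ?_⟩
  rw [div_le_iff₀ (by positivity)]
  nlinarith [cone_defect_le hkn hm hd1]

/-- For `n ≥ 1`, `1 ≤ k ≤ n` and positive integers `d 0, …, d (k-1)` with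
`∑ d j < n + 1`, setting
`a j = (∑ i, d i + (n-k+1) * d j - (n+1)) / ((n-k+1) * d j)` and, for `m < k`
(0-based, corresponding to step `m+1`),
`r m = ((n+1) - ∑_{j ≤ m} d j - ∑_{m < j < k} a j * d j) / d m`,
one has `0 < r m ≤ n - m` for every `m < k`
(in 1-based indexing, `0 < r m ≤ n - m + 1`). -/
theorem cone_index_bounds
    (n k : ℕ) (hn : 1 ≤ n) (hk1 : 1 ≤ k) (hkn : k ≤ n)
    (d : ℕ → ℕ) (hd : ∀ j < k, 0 < d j)
    (hsum : ∑ j ∈ range k, d j < n + 1)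
    (a : ℕ → ℚ)
    (ha : ∀ j < k, a j =
      ((∑ i ∈ range k, (d i : ℚ)) + ((n : ℚ) - k + 1) * d j - ((n : ℚ) + 1)) /
        (((n : ℚ) - k + 1) * d j))
    (r : ℕ → ℚ)
    (hr : ∀ m < k, r m =
      (((n : ℚ) + 1) - (∑ j ∈ range (m + 1), (d j : ℚ)) -
        (∑ j ∈ Ico (m + 1) k, a j * d j)) / d m) :
    ∀ m < k, 0 < r m ∧ r m ≤ (n : ℚ) - m :=
  cone_index_bounds_general n k hkn d hd hsum a ha r hr
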